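/- arXiv:2307.04774 — 6 statements merged into one kernel-verified Lean document; each statement's English description precedes it below -/
import Mathlib

section
/- Let n be a positive natural number, let V be a real n×n matrix, let α, b ∈ ℝ^n, let B be the rank-one matrix with entries B_{jk} = b_j·α_k, let s : ℝ → ℝ be continuous, and let i : ℝ → ℝ^n (a row vector) be differentiable with i'(t) = i(t)·(s(t)·B − V) for all t. Define the scalar total force of infection ĩ(t) = i(t)·b (dot product) and the age-of-infection kernel a(u) = α·exp(−u·V)·b (row vector α times matrix exponential times column vector b). Then for all t ≥ 0, ĩ(t) = i(0)·exp(−t·V)·b + ∫_0^t s(τ)·ĩ(τ)·a(t−τ) dτ. -/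
/-!
For fixed `t`, the scalar `g τ = i(τ)·exp((τ − t)V)·b` has derivative
`s(τ)·i(τ)·B·exp((τ − t)V)·b`: the `−V` term of the ODE cancels against the derivative of
the exponential. Integrating from `0` to `t` gives the variation-of-constants formula, and
`B = b αᵀ` factors the integrand as `s(τ)·ĩ(τ)·a(t − τ)`.
-/

open Matrix MeasureTheory

attribute [local instance] Matrix.linftyOpNormedRing Matrix.linftyOpNormedAlgebra

section

variable {m : Type*} [Fintype m]

theorem HasDerivAt.dotProduct {𝕜 : Type*} [NontriviallyNormedField 𝕜]
    {x y : 𝕜 → m → 𝕜} {x' y' : m → 𝕜} {t : 𝕜}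
    (hx : HasDerivAt x x' t) (hy : HasDerivAt y y' t) :
    HasDerivAt (fun t => x t ⬝ᵥ y t) (x' ⬝ᵥ y t + x t ⬝ᵥ y') t := by
  have h := HasDerivAt.fun_sum (u := Finset.univ)
    fun j _ => (hasDerivAt_pi.1 hx j).fun_mul (hasDerivAt_pi.1 hy j)
  rw [Finset.sum_add_distrib] at h
  exact h

theorem hasDerivAt_exp_smul_mulVec [DecidableEq m] (V : Matrix m m ℝ) (c : m → ℝ) (u : ℝ) :
    HasDerivAt (fun u : ℝ => NormedSpace.exp (u • V) *ᵥ c)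
      (V *ᵥ (NormedSpace.exp (u • V) *ᵥ c)) u := by
  have h := (LinearMap.toContinuousLinearMap ((mulVecBilin ℝ ℝ).flip c)).hasFDerivAt
    |>.comp_hasDerivAt u (hasDerivAt_exp_smul_const' V u)
  rw [mulVec_mulVec]
  exact h

/-- Duhamel's formula for `x' = f − x V`, paired with a fixed column vector `c`. -/
theorem dotProduct_eq_add_integral_of_hasDerivAt [DecidableEq m] {V : Matrix m m ℝ}
    {x f : ℝ → m → ℝ} (hf : Continuous f) (hx : ∀ t, HasDerivAt x (f t - x t ᵥ* V) t)
    (c : m → ℝ) (t : ℝ) :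
    x t ⬝ᵥ c = (x 0 ᵥ* NormedSpace.exp ((-t) • V)) ⬝ᵥ c +
      ∫ τ in (0 : ℝ)..t, f τ ⬝ᵥ (NormedSpace.exp ((τ - t) • V) *ᵥ c) := by
  set w : ℝ → m → ℝ := fun u => NormedSpace.exp (u • V) *ᵥ c
  have hw (τ : ℝ) : HasDerivAt (fun τ => w (τ - t)) (V *ᵥ w (τ - t)) τ :=
    (hasDerivAt_exp_smul_mulVec V c (τ - t)).comp_sub_const τ t
  have hg (τ : ℝ) : HasDerivAt (fun τ => x τ ⬝ᵥ w (τ - t)) (f τ ⬝ᵥ w (τ - t)) τ := by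
    refine ((hx τ).dotProduct (hw τ)).congr_deriv ?_
    rw [sub_dotProduct, ← dotProduct_mulVec, sub_add_cancel]
  have hw_cont : Continuous fun τ => w (τ - t) :=
    continuous_iff_continuousAt.2 fun τ => (hw τ).continuousAt
  have hint : IntervalIntegrable (fun τ => f τ ⬝ᵥ w (τ - t)) volume 0 t :=
    (hf.dotProduct hw_cont).intervalIntegrable 0 t
  rw [intervalIntegral.integral_eq_sub_of_hasDerivAt (fun τ _ => hg τ) hint]
  simp only [w, sub_self, zero_sub, zero_smul, NormedSpace.exp_zero, one_mulVec,
    dotProduct_mulVec]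
  abel

end

theorem stmt1_general (n : ℕ) (V : Matrix (Fin n) (Fin n) ℝ)
    (α b : Fin n → ℝ)
    (B : Matrix (Fin n) (Fin n) ℝ) (hB : ∀ j k, B j k = b j * α k)
    (s : ℝ → ℝ) (hs : Continuous s)
    (i : ℝ → Fin n → ℝ)
    (hi : ∀ t : ℝ, HasDerivAt i ((i t) ᵥ* (s t • B - V)) t)
    (itil : ℝ → ℝ) (hitil : ∀ t, itil t = i t ⬝ᵥ b)
    (a : ℝ → ℝ) (ha : ∀ u : ℝ, a u = α ⬝ᵥ (NormedSpace.exp ((-u) • V) *ᵥ b)) :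
    ∀ t : ℝ, 0 ≤ t →
      itil t = ((i 0) ᵥ* NormedSpace.exp ((-t) • V)) ⬝ᵥ b +
        ∫ τ in (0:ℝ)..t, s τ * itil τ * a (t - τ) := by
  intro t _
  have hB' : B = vecMulVec b α := by ext j k; exact hB j k
  have hi_cont : Continuous i := continuous_iff_continuousAt.2 fun τ => (hi τ).continuousAt
  have hf : Continuous fun τ => s τ • (i τ ᵥ* B) :=
    hs.smul (hi_cont.matrix_vecMul continuous_const)
  have hi' (τ : ℝ) : HasDerivAt i (s τ • (i τ ᵥ* B) - i τ ᵥ* V) τ := by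
    simpa only [vecMul_sub, vecMul_smul] using hi τ
  rw [hitil, dotProduct_eq_add_integral_of_hasDerivAt hf hi' b t]
  congr 1
  refine intervalIntegral.integral_congr fun τ _ => ?_
  simp only [hitil, ha, neg_sub, hB', vecMul_vecMulVec, smul_dotProduct, smul_eq_mul]
  ring

/-- Renewal equation for the total force of infection of a SIR-PH-FA model with
rank-one new-infections matrix `B = b αᵀ`: if `i'(t) = i(t)·(s(t)B − V)`,
`ĩ(t) = i(t)·b` and `a(u) = α·exp(−uV)·b`, then for `t ≥ 0`,
`ĩ(t) = i(0)·exp(−tV)·b + ∫_0^t s(τ)·ĩ(τ)·a(t−τ) dτ`. -/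
theorem stmt1 (n : ℕ) (hn : 0 < n) (V : Matrix (Fin n) (Fin n) ℝ)
    (α b : Fin n → ℝ)
    (B : Matrix (Fin n) (Fin n) ℝ) (hB : ∀ j k, B j k = b j * α k)
    (s : ℝ → ℝ) (hs : Continuous s)
    (i : ℝ → Fin n → ℝ)
    (hi : ∀ t : ℝ, HasDerivAt i ((i t) ᵥ* (s t • B - V)) t)
    (itil : ℝ → ℝ) (hitil : ∀ t, itil t = i t ⬝ᵥ b)
    (a : ℝ → ℝ) (ha : ∀ u : ℝ, a u = α ⬝ᵥ (NormedSpace.exp ((-u) • V) *ᵥ b)) :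
    ∀ t : ℝ, 0 ≤ t →
      itil t = ((i 0) ᵥ* NormedSpace.exp ((-t) • V)) ⬝ᵥ b +
        ∫ τ in (0:ℝ)..t, s τ * itil τ * a (t - τ) :=
  stmt1_general n V α b B hB s hs i hi itil hitil a ha
end

section
/- Let V be a real n×n matrix all of whose complex eigenvalues (roots of its characteristic polynomial over ℂ) have strictly positive real part. Then V is invertible, the improper integral ∫_0^∞ exp(−τ·V) dτ converges (entrywise), and ∫_0^∞ exp(−τ·V) dτ = V⁻¹. -/
open Matrix MeasureTheory

/-!
Every eigenvalue of `exp (-V)` has the form `exp (-μ)` with `μ` an eigenvalue of `V`: `exp (-V)` is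
a polynomial `p (-V)`, the spectral mapping theorem gives `σ (p (-V)) = p (σ (-V))`, and a left
eigenvector of `-V` for `-μ` shows `p (-μ) = exp (-μ)`. So the spectral radius of `exp (-V)` is
below `1`, and Gelfand's formula gives `‖exp (-V) ^ k‖ ≤ r ^ k` for large `k` and some `r < 1`;
writing `t = ⌊t⌋ + s` with `s ∈ [0, 1]` turns this into exponential decay of `exp (-t V)`. Then
`-V⁻¹ exp (-t V)` is an antiderivative of `exp (-t V)` vanishing at infinity, and the improper
integral equals its value `V⁻¹` at `0`.
-/

open Filter Asymptotics Topology NormedSpace Polynomial Set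
open scoped NNReal

variable {𝕂 𝔸 : Type*}

section Spectrum

theorem mul_pow_eq_pow_smul [CommSemiring 𝕂] [Semiring 𝔸] [Algebra 𝕂 𝔸] {a c : 𝔸} {μ : 𝕂}
    (h : c * a = μ • c) (n : ℕ) : c * a ^ n = μ ^ n • c := by
  induction n with
  | zero => simp
  | succ n ih => rw [pow_succ, ← mul_assoc, ih, smul_mul_assoc, h, smul_smul, pow_succ]

theorem mul_aeval_eq_eval_smul [CommSemiring 𝕂] [Semiring 𝔸] [Algebra 𝕂 𝔸] {a c : 𝔸} {μ : 𝕂}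
    (h : c * a = μ • c) (p : 𝕂[X]) : c * aeval a p = p.eval μ • c := by
  induction p using Polynomial.induction_on' with
  | add p q hp hq => simp [mul_add, hp, hq, add_smul]
  | monomial n r =>
    simp [← Algebra.smul_def, mul_pow_eq_pow_smul h, smul_smul]

theorem mul_exp_eq_exp_smul [RCLike 𝕂] [NormedRing 𝔸] [NormedAlgebra 𝕂 𝔸] [CompleteSpace 𝔸]
    {a c : 𝔸} {μ : 𝕂} (h : c * a = μ • c) : c * exp a = exp μ • c := by
  let : NormedAlgebra ℚ 𝔸 := .restrictScalars ℚ 𝕂 𝔸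
  have hsemi : SemiconjBy c a (algebraMap 𝕂 𝔸 μ) := by
    rw [SemiconjBy, h, Algebra.smul_def]
  have := hsemi.exp_right
  rwa [SemiconjBy, ← algebraMap_exp_comm, ← Algebra.smul_def] at this

theorem exp_mem_adjoin_singleton [RCLike 𝕂] [NormedRing 𝔸] [NormedAlgebra 𝕂 𝔸]
    [FiniteDimensional 𝕂 𝔸] (a : 𝔸) : exp a ∈ Algebra.adjoin 𝕂 {a} :=
  letI : NormedAlgebra ℚ 𝔸 := .restrictScalars ℚ 𝕂 𝔸
  exp_mem (R := 𝕂) (s := Algebra.adjoin 𝕂 {a})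
    (Subalgebra.toSubmodule (Algebra.adjoin 𝕂 {a})).closed_of_finiteDimensional
    (Algebra.self_mem_adjoin_singleton 𝕂 a)

theorem exists_ne_zero_mul_eq_smul_of_mem_spectrum [Field 𝕂] [Ring 𝔸] [Algebra 𝕂 𝔸]
    [IsArtinianRing 𝔸] {a : 𝔸} {μ : 𝕂} (hμ : μ ∈ spectrum 𝕂 a) :
    ∃ c ≠ 0, c * a = μ • c := by
  rw [spectrum.mem_iff, IsArtinianRing.isUnit_iff_isRightRegular, IsRightRegular,
    Function.Injective] at hμ
  push Not at hμ
  obtain ⟨x, y, hxy, hne⟩ := hμ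
  refine ⟨x - y, sub_ne_zero.mpr hne, ?_⟩
  simp only [mul_sub, Algebra.algebraMap_eq_smul_one, mul_smul_one,
    sub_eq_sub_iff_add_eq_add] at hxy
  rw [sub_mul, smul_sub, sub_eq_sub_iff_add_eq_add, add_comm, ← hxy]

theorem spectrum_exp_subset_image [NormedRing 𝔸] [NormedAlgebra ℂ 𝔸] [FiniteDimensional ℂ 𝔸]
    (a : 𝔸) : spectrum ℂ (exp a) ⊆ Complex.exp '' spectrum ℂ a := by
  rcases subsingleton_or_nontrivial 𝔸 with _ | _
  · simp [spectrum.of_subsingleton]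
  have := FiniteDimensional.complete ℂ 𝔸
  have := IsArtinianRing.of_finite ℂ 𝔸
  obtain ⟨p, hp⟩ := (AlgHom.mem_range _).mp
    (Algebra.adjoin_singleton_eq_range_aeval ℂ a ▸ exp_mem_adjoin_singleton a)
  rw [← hp, spectrum.map_polynomial_aeval]
  rintro _ ⟨μ, hμ, rfl⟩
  refine ⟨μ, hμ, ?_⟩
  obtain ⟨c, hc, hca⟩ := exists_ne_zero_mul_eq_smul_of_mem_spectrum hμ
  have hsmul : exp μ • c = p.eval μ • c := by
    rw [← mul_exp_eq_exp_smul hca, ← hp, mul_aeval_eq_eval_smul hca]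
  rw [Complex.exp_eq_exp_ℂ]
  exact smul_left_injective ℂ hc hsmul

theorem spectralRadius_exp_neg_lt_one [NormedRing 𝔸] [NormedAlgebra ℂ 𝔸] [FiniteDimensional ℂ 𝔸]
    {a : 𝔸} (ha : ∀ μ ∈ spectrum ℂ a, 0 < μ.re) : spectralRadius ℂ (exp (-a)) < 1 := by
  rcases subsingleton_or_nontrivial 𝔸 with _ | _
  · simp [Subsingleton.elim (exp (-a)) 0]
  have := FiniteDimensional.complete ℂ 𝔸
  refine spectrum.spectralRadius_lt_of_forall_lt _ fun z hz => ?_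
  obtain ⟨μ, hμ, rfl⟩ := spectrum_exp_subset_image (-a) hz
  have hre : 0 < (-μ).re := ha _ (by simpa [← spectrum.neg_eq] using hμ)
  rw [← NNReal.coe_lt_coe, coe_nnnorm, Complex.norm_exp]
  simpa using hre

theorem exists_eventually_norm_pow_le_of_spectralRadius_lt_one [NormedRing 𝔸] [NormedAlgebra ℂ 𝔸]
    [CompleteSpace 𝔸] {b : 𝔸} (hb : spectralRadius ℂ b < 1) :
    ∃ r : ℝ, 0 < r ∧ r < 1 ∧ ∀ᶠ k : ℕ in atTop, ‖b ^ k‖ ≤ r ^ k := by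
  obtain ⟨r, hρr, hr1⟩ := exists_between hb
  lift r to ℝ≥0 using hr1.ne_top
  refine ⟨r, by simpa using zero_le.trans_lt hρr, by exact_mod_cast hr1, ?_⟩
  have hgelfand := spectrum.pow_nnnorm_pow_one_div_tendsto_nhds_spectralRadius b
  filter_upwards [hgelfand.eventually_lt_const hρr, eventually_gt_atTop 0] with k hk hk0
  rw [one_div, ENNReal.rpow_inv_lt_iff (by positivity), ENNReal.rpow_natCast] at hk
  exact_mod_cast hk.le

end Spectrum

theorem integrableOn_Ioi_of_isBigO_exp_neg {E : Type*} [NormedAddCommGroup E] {f : ℝ → E}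
    {a b : ℝ} (hb : 0 < b) (hf : ContinuousOn f (Ici a))
    (ho : f =O[atTop] fun x => Real.exp (-b * x)) : IntegrableOn f (Ioi a) :=
  integrableOn_Ici_iff_integrableOn_Ioi (by finiteness) |>.mp <|
    (hf.locallyIntegrableOn measurableSet_Ici).integrableOn_of_isBigO_atTop
    ho ⟨Ioi b, Ioi_mem_atTop b, exp_neg_integrableOn_Ioi b hb⟩

section RealBanachAlgebra

variable [NormedRing 𝔸] [NormedAlgebra ℝ 𝔸] [CompleteSpace 𝔸]

theorem continuous_exp_neg_smul (a : 𝔸) : Continuous fun t : ℝ => exp ((-t) • a) := by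
  let : NormedAlgebra ℚ 𝔸 := .restrictScalars ℚ ℝ 𝔸
  exact exp_continuous.comp (by fun_prop)

theorem exp_neg_smul_eq_pow_mul (a : 𝔸) (t : ℝ) (k : ℕ) :
    exp ((-t) • a) = exp (-a) ^ k * exp ((-(t - k)) • a) := by
  let : NormedAlgebra ℚ 𝔸 := .restrictScalars ℚ ℝ 𝔸
  have hcomm : Commute (k • -a) ((-(t - k)) • a) :=
    ((Commute.refl a).neg_left.smul_left k).smul_right _
  rw [← NormedSpace.exp_nsmul, ← exp_add_of_commute hcomm]
  congr 1
  rw [← Nat.cast_smul_eq_nsmul ℝ, smul_neg, ← neg_smul, ← add_smul]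
  ring_nf

theorem isBigO_exp_neg_smul_rpow (a : 𝔸) {r : ℝ} (hr0 : 0 < r) (hr1 : r ≤ 1)
    (h : ∀ᶠ k : ℕ in atTop, ‖exp (-a) ^ k‖ ≤ r ^ k) :
    (fun t : ℝ => exp ((-t) • a)) =O[atTop] fun t => r ^ t := by
  obtain ⟨K, hK⟩ := eventually_atTop.mp h
  obtain ⟨M, hM⟩ := (isCompact_Icc (a := (0 : ℝ)) (b := 1)).exists_bound_of_continuousOn
    (continuous_exp_neg_smul a).continuousOn
  refine IsBigO.of_bound (M * r⁻¹) ?_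
  filter_upwards [eventually_ge_atTop (K : ℝ), eventually_ge_atTop 0] with t hKt ht0
  set k := ⌊t⌋₊
  have hk : t - 1 ≤ k := sub_le_iff_le_add.mpr (Nat.lt_floor_add_one t).le
  have hfrac : t - k ∈ Icc (0 : ℝ) 1 := ⟨sub_nonneg.mpr (Nat.floor_le ht0), by linarith⟩
  have hrk : r ^ k ≤ r ^ t * r⁻¹ := by
    rw [← Real.rpow_natCast, ← div_eq_mul_inv, ← Real.rpow_sub_one hr0.ne']
    exact Real.rpow_le_rpow_of_exponent_ge hr0 hr1 hk
  have hM0 : 0 ≤ M := (norm_nonneg _).trans (hM 0 (by simp))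
  rw [exp_neg_smul_eq_pow_mul a t k, Real.norm_of_nonneg (Real.rpow_nonneg hr0.le t)]
  calc ‖exp (-a) ^ k * exp ((-(t - k)) • a)‖
      ≤ ‖exp (-a) ^ k‖ * ‖exp ((-(t - k)) • a)‖ := norm_mul_le _ _
    _ ≤ r ^ k * M := mul_le_mul (hK k (Nat.le_floor hKt)) (hM _ hfrac) (norm_nonneg _)
        (pow_nonneg hr0.le k)
    _ ≤ r ^ t * r⁻¹ * M := mul_le_mul_of_nonneg_right hrk hM0
    _ = M * r⁻¹ * r ^ t := by ring

variable {ε : ℝ}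

theorem integrableOn_exp_neg_smul_Ioi {a : 𝔸} (hε : 0 < ε)
    (hdecay : (fun t : ℝ => exp ((-t) • a)) =O[atTop] fun t => Real.exp (-ε * t)) :
    IntegrableOn (fun t : ℝ => exp ((-t) • a)) (Ioi 0) :=
  integrableOn_Ioi_of_isBigO_exp_neg hε (continuous_exp_neg_smul a).continuousOn hdecay

theorem integral_exp_neg_smul_Ioi {a : 𝔸} (ha : IsUnit a) (hε : 0 < ε)
    (hdecay : (fun t : ℝ => exp ((-t) • a)) =O[atTop] fun t => Real.exp (-ε * t)) :
    ∫ t in Ioi (0 : ℝ), exp ((-t) • a) = Ring.inverse a := by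
  have hderiv (t : ℝ) :
      HasDerivAt (fun t : ℝ => -(Ring.inverse a * exp ((-t) • a))) (exp ((-t) • a)) t := by
    have hexp : HasDerivAt (fun t : ℝ => exp ((-t) • a)) (-(a * exp ((-t) • a))) t :=
      ((hasDerivAt_exp_smul_const' a (-t)).scomp t (hasDerivAt_neg t)).congr_deriv (by simp)
    exact (hexp.const_mul (Ring.inverse a)).fun_neg.congr_deriv
      (by simp [← mul_assoc, Ring.inverse_mul_cancel a ha])
  have hlim : Tendsto (fun t : ℝ => exp ((-t) • a)) atTop (𝓝 0) :=
    hdecay.trans_tendsto <| Real.tendsto_exp_atBot.comp <|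
      tendsto_id.const_mul_atTop_of_neg (neg_neg_iff_pos.mpr hε)
  rw [integral_Ioi_of_hasDerivAt_of_tendsto' (fun t _ => hderiv t)
    (integrableOn_exp_neg_smul_Ioi hε hdecay) (by simpa using (hlim.const_mul _).neg)]
  simp

end RealBanachAlgebra

section Matrix

open scoped Matrix.Norms.Frobenius

variable {ι : Type*} [Fintype ι] [DecidableEq ι]

theorem Matrix.map_exp_of_continuous {α β : Type*} [RCLike α] [RCLike β] (f : α →+* β)
    (hf : Continuous f) (M : Matrix ι ι α) : (exp M).map f = exp (M.map f) :=
  map_exp f.mapMatrix (continuous_id.matrix_map hf) M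

theorem Matrix.exists_isBigO_exp_neg_smul (V : Matrix ι ι ℝ)
    (hV : ∀ μ ∈ spectrum ℂ (V.map (algebraMap ℝ ℂ)), 0 < μ.re) :
    ∃ ε > 0, (fun t : ℝ => exp ((-t) • V)) =O[atTop] fun t => Real.exp (-ε * t) := by
  obtain ⟨r, hr0, hr1, hpow⟩ :=
    exists_eventually_norm_pow_le_of_spectralRadius_lt_one (spectralRadius_exp_neg_lt_one hV)
  have hnorm (k : ℕ) : ‖exp (-V) ^ k‖ = ‖exp (-V.map (algebraMap ℝ ℂ)) ^ k‖ := by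
    rw [← frobenius_norm_map_eq (exp (-V) ^ k) (algebraMap ℝ ℂ) (by simp), Matrix.map_pow,
      Matrix.map_exp_of_continuous _ (continuous_algebraMap ℝ ℂ), Matrix.map_neg _ (map_neg _)]
  refine ⟨-Real.log r, neg_pos.mpr (Real.log_neg hr0 hr1), ?_⟩
  have hpowV : ∀ᶠ k : ℕ in atTop, ‖exp (-V) ^ k‖ ≤ r ^ k :=
    hpow.mono fun k hk => (hnorm k).trans_le hk
  exact (isBigO_exp_neg_smul_rpow V hr0 hr1.le hpowV).congr_right
    fun t => by rw [neg_neg, Real.rpow_def_of_pos hr0]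

variable {V : Matrix ι ι ℝ} {ε : ℝ}

theorem Matrix.integrableOn_exp_neg_smul_apply (hε : 0 < ε)
    (hdecay : (fun t : ℝ => exp ((-t) • V)) =O[atTop] fun t => Real.exp (-ε * t)) (j k : ι) :
    IntegrableOn (fun t : ℝ => exp ((-t) • V) j k) (Ioi 0) :=
  (entryLinearMap ℝ ℝ j k).toContinuousLinearMap.integrable_comp
    (integrableOn_exp_neg_smul_Ioi hε hdecay)

theorem Matrix.integral_exp_neg_smul_apply (hV : IsUnit V) (hε : 0 < ε)
    (hdecay : (fun t : ℝ => exp ((-t) • V)) =O[atTop] fun t => Real.exp (-ε * t)) (j k : ι) :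
    ∫ t in Ioi (0 : ℝ), exp ((-t) • V) j k = V⁻¹ j k := by
  rw [nonsing_inv_eq_ringInverse, ← integral_exp_neg_smul_Ioi hV hε hdecay]
  exact (entryLinearMap ℝ ℝ j k).toContinuousLinearMap.integral_comp_comm
    (integrableOn_exp_neg_smul_Ioi hε hdecay)

end Matrix

/-- If every complex eigenvalue of the real matrix `V` has strictly positive real
part, then `V` is invertible, the entrywise improper integral `∫_0^∞ exp(−τV) dτ`
converges, and it equals `V⁻¹`. -/
theorem stmt2 (n : ℕ) (V : Matrix (Fin n) (Fin n) ℝ)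
    (hV : ∀ z : ℂ, ((V.map (algebraMap ℝ ℂ)).charpoly).IsRoot z → 0 < z.re) :
    IsUnit V ∧
    (∀ j k : Fin n,
      IntegrableOn (fun τ : ℝ => NormedSpace.exp ((-τ) • V) j k) (Set.Ioi 0)) ∧
    (∀ j k : Fin n,
      ∫ τ in Set.Ioi (0:ℝ), NormedSpace.exp ((-τ) • V) j k = V⁻¹ j k) := by
  have hspec : ∀ μ ∈ spectrum ℂ (V.map (algebraMap ℝ ℂ)), 0 < μ.re :=
    fun μ hμ => hV μ (Matrix.mem_spectrum_iff_isRoot_charpoly.mp hμ)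
  have hunit : IsUnit V := by
    have h0 := mt (hspec 0) (lt_irrefl _)
    rw [spectrum.zero_mem_iff, not_not, Matrix.isUnit_iff_isUnit_det, isUnit_iff_ne_zero] at h0
    rw [Matrix.isUnit_iff_isUnit_det, isUnit_iff_ne_zero]
    intro hdet
    exact h0 (by rw [← RingHom.mapMatrix_apply, ← RingHom.map_det, hdet, map_zero])
  obtain ⟨ε, hε, hdecay⟩ := V.exists_isBigO_exp_neg_smul hspec
  exact ⟨hunit, Matrix.integrableOn_exp_neg_smul_apply hε hdecay,
    Matrix.integral_exp_neg_smul_apply hunit hε hdecay⟩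
end

section
/- Let V be a real n×n matrix, let α, b ∈ ℝ^n, and let z be a real number such that every complex eigenvalue of the matrix z·I + V has strictly positive real part. Then z·I + V is invertible, and the Laplace transform of the age-of-infection kernel a(τ) = α·exp(−τ·V)·b satisfies ∫_0^∞ e^{−zτ}·α·exp(−τ·V)·b dτ = α·(z·I + V)⁻¹·b. -/
/-!
Put `A = z • 1 + V`. Since `e^{-zτ} e^{-τV} = e^{-τA}`, the integrand is `α ⬝ᵥ e^{-τA} b`, and
`τ ↦ -e^{-τA} A⁻¹ b` is an antiderivative of `e^{-τA} b`, so the integral is `α ⬝ᵥ A⁻¹ b` as soon as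
`e^{-τA}` decays exponentially. For the decay, split a vector (over `ℂ`) into generalized
eigenvectors of `A`: on the generalized eigenspace of `μ`, `e^{-τA}` acts as `e^{-τμ}` times a
polynomial in `τ`, and `Re μ > 0`.
-/

open Matrix MeasureTheory NormedSpace Filter Asymptotics Topology
open scoped Nat

namespace Matrix

variable {ι : Type*} [Fintype ι] [DecidableEq ι]

theorem exp_smul_one_add {𝔸 : Type*} [NormedCommRing 𝔸] [NormedAlgebra ℚ 𝔸] [CompleteSpace 𝔸]
    (c : 𝔸) (M : Matrix ι ι 𝔸) : exp (c • 1 + M) = exp c • exp M := by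
  rw [exp_add_of_commute _ _ ((Commute.one_left M).smul_left c), smul_one_eq_diagonal,
    exp_diagonal, Pi.exp_def, ← smul_one_eq_diagonal, smul_mul_assoc, one_mul]

theorem exp_mulVec_of_pow_mulVec_eq_zero {𝕂 : Type*} [RCLike 𝕂] {N : Matrix ι ι 𝕂}
    {x : ι → 𝕂} {k : ℕ} (hx : N ^ k *ᵥ x = 0) :
    exp N *ᵥ x = ∑ j ∈ Finset.range k, (j !⁻¹ : 𝕂) • (N ^ j *ᵥ x) := by
  have hsum : HasSum (fun j => ((j !⁻¹ : 𝕂) • N ^ j) *ᵥ x) (exp N *ᵥ x) := by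
    open scoped Norms.Operator in
    exact (exp_series_hasSum_exp' N).map (mulVec.addMonoidHomLeft x)
      (continuous_id.matrix_mulVec continuous_const)
  refine hsum.unique (hasSum_sum_of_ne_finset_zero fun j hj => ?_) |>.trans
    (Finset.sum_congr rfl fun j _ => smul_mulVec _ _ _)
  rw [Finset.mem_range, not_lt] at hj
  rw [smul_mulVec, ← Nat.sub_add_cancel hj, pow_add, ← mulVec_mulVec, hx, mulVec_zero, smul_zero]

theorem exp_smul_mulVec_of_pow_sub_mulVec_eq_zero {B : Matrix ι ι ℂ} {μ : ℂ} {x : ι → ℂ}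
    {k : ℕ} (hx : (B - μ • 1) ^ k *ᵥ x = 0) (t : ℂ) :
    exp (t • B) *ᵥ x =
      Complex.exp (t * μ) • ∑ j ∈ Finset.range k, (t ^ j / j !) • ((B - μ • 1) ^ j *ᵥ x) := by
  set N := B - μ • 1
  have hsplit : t • B = (t * μ) • 1 + t • N := by
    simp only [N, smul_sub, smul_smul, add_sub_cancel]
  have hN : (t • N) ^ k *ᵥ x = 0 := by rw [smul_pow, smul_mulVec, hx, smul_zero]
  rw [hsplit, exp_smul_one_add, ← Complex.exp_eq_exp_ℂ, smul_mulVec,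
    exp_mulVec_of_pow_mulVec_eq_zero hN]
  refine congrArg _ (Finset.sum_congr rfl fun j _ => ?_)
  rw [smul_pow, smul_mulVec, smul_smul, div_eq_inv_mul]

theorem isBigO_exp_neg_smul_mulVec_of_mem_maxGenEigenspace {B : Matrix ι ι ℂ} {μ : ℂ} {ε : ℝ}
    (hε : ε < μ.re) {x : ι → ℂ} (hx : x ∈ Module.End.maxGenEigenspace (toLin' B) μ) :
    (fun τ : ℝ => exp ((-τ : ℂ) • B) *ᵥ x) =O[atTop] fun τ => Real.exp (-ε * τ) := by
  obtain ⟨k, hk⟩ := (Module.End.mem_maxGenEigenspace _ _ _).1 hx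
  have hk' : (B - μ • 1) ^ k *ᵥ x = 0 := by
    simpa [← toLin'_apply, Module.End.one_eq_id] using hk
  simp_rw [exp_smul_mulVec_of_pow_sub_mulVec_eq_zero hk']
  have hexp : (fun τ : ℝ => Complex.exp (-τ * μ)) =O[atTop] fun τ => Real.exp (-μ.re * τ) :=
    isBigO_of_le _ fun τ => by simp [Complex.norm_exp, mul_comm]
  -- the polynomial factor is absorbed by the spectral gap `μ.re - ε`
  have hpoly : (fun τ : ℝ => ∑ j ∈ Finset.range k, ((-τ : ℂ) ^ j / j !) • ((B - μ • 1) ^ j *ᵥ x))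
      =O[atTop] fun τ => Real.exp ((μ.re - ε) * τ) := by
    refine IsBigO.fun_sum fun j _ => ?_
    refine IsBigO.trans ?_ (isLittleO_pow_exp_pos_mul_atTop j (sub_pos.2 hε)).isBigO
    refine isBigO_of_le' (c := ‖(B - μ • 1) ^ j *ᵥ x‖ / (j ! : ℝ)) _ fun τ => ?_
    simp only [norm_smul, norm_div, norm_pow, norm_neg, Complex.norm_real, Complex.norm_natCast,
      Real.norm_eq_abs]
    exact (div_mul_comm _ _ _).le
  refine (hexp.smul hpoly).congr_right fun τ => ?_
  rw [smul_eq_mul, ← Real.exp_add]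
  ring_nf

theorem isBigO_exp_neg_smul_mulVec {B : Matrix ι ι ℂ} {ε : ℝ}
    (hB : ∀ μ, Module.End.HasEigenvalue (toLin' B) μ → ε < μ.re) (x : ι → ℂ) :
    (fun τ : ℝ => exp ((-τ : ℂ) • B) *ᵥ x) =O[atTop] fun τ => Real.exp (-ε * τ) := by
  have hx : x ∈ ⨆ μ, Module.End.maxGenEigenspace (toLin' B) μ := by
    rw [Module.End.iSup_maxGenEigenspace_eq_top]
    trivial
  refine Submodule.iSup_induction _ (motive := fun x =>
    (fun τ : ℝ => exp ((-τ : ℂ) • B) *ᵥ x) =O[atTop] fun τ => Real.exp (-ε * τ)) hx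
    (fun μ y hy => ?_) (by simp only [mulVec_zero, isBigO_zero])
    fun y z hy hz => by simpa only [mulVec_add] using hy.add hz
  obtain rfl | hy0 := eq_or_ne y 0
  · simp only [mulVec_zero, isBigO_zero]
  refine isBigO_exp_neg_smul_mulVec_of_mem_maxGenEigenspace (hB μ ?_) hy
  exact (Module.End.hasUnifEigenvalue_iff_hasUnifEigenvalue_one (by simp)).1
    ((Submodule.ne_bot_iff _).2 ⟨y, hy, hy0⟩)

theorem map_exp_algebraMap (A : Matrix ι ι ℝ) :
    (exp A).map (algebraMap ℝ ℂ) = exp (A.map (algebraMap ℝ ℂ)) := by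
  open scoped Norms.Operator in
  exact map_exp (algebraMap ℝ ℂ).mapMatrix (continuous_id.matrix_map Complex.continuous_ofReal) A

theorem exists_pos_isBigO_exp_neg_smul_mulVec (A : Matrix ι ι ℝ)
    (hA : ∀ μ : ℂ, (A.map (algebraMap ℝ ℂ)).charpoly.IsRoot μ → 0 < μ.re) :
    ∃ ε > 0, ∀ x : ι → ℝ,
      (fun τ : ℝ => exp ((-τ) • A) *ᵥ x) =O[atTop] fun τ => Real.exp (-ε * τ) := by
  set B := A.map (algebraMap ℝ ℂ)
  obtain ⟨ε, hεμ, hε⟩ : ∃ ε, (∀ μ, B.charpoly.IsRoot μ → ε < μ.re) ∧ 0 < ε :=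
    (((eventually_all_finite (Polynomial.finite_setOfPred_isRoot B.charpoly_monic.ne_zero)).2
      fun μ hμ => nhdsWithin_le_nhds (eventually_lt_nhds (hA μ hμ))).and
        self_mem_nhdsWithin).exists (f := 𝓝[>] 0)
  refine ⟨ε, hε, fun x => ?_⟩
  have hB := isBigO_exp_neg_smul_mulVec (B := B) (fun μ hμ => hεμ μ <| by
    rwa [Module.End.hasEigenvalue_iff_isRoot_charpoly, charpoly_toLin'] at hμ) (fun i => (x i : ℂ))
  refine IsBigO.trans (isBigO_of_le _ fun τ => ?_) hB
  have hmap : exp ((-τ : ℂ) • B) *ᵥ (fun i => (x i : ℂ)) =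
      fun i => ((exp ((-τ) • A) *ᵥ x) i : ℂ) := by
    ext i
    rw [← Complex.coe_algebraMap, RingHom.map_mulVec, map_exp_algebraMap]
    congr 3
    ext
    simp [B]
  rw [hmap, pi_norm_le_iff_of_nonneg (norm_nonneg _)]
  intro i
  simpa only [Complex.norm_real] using norm_le_pi_norm (fun i => ((exp ((-τ) • A) *ᵥ x) i : ℂ)) i

theorem isUnit_of_not_isRoot_charpoly_map_zero {K L : Type*} [Field K] [Field L] (f : K →+* L)
    {A : Matrix ι ι K} (h0 : ¬(A.map f).charpoly.IsRoot 0) : IsUnit A := by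
  rwa [← mem_spectrum_iff_isRoot_charpoly, spectrum.zero_mem_iff, not_not, isUnit_iff_isUnit_det,
    ← RingHom.mapMatrix_apply, ← RingHom.map_det, isUnit_map_iff, ← isUnit_iff_isUnit_det] at h0

theorem hasDerivAt_exp_neg_smul_mulVec (A : Matrix ι ι ℝ) (c : ι → ℝ) (τ : ℝ) :
    HasDerivAt (fun t : ℝ => exp ((-t) • A) *ᵥ c) (-(exp ((-τ) • A) *ᵥ (A *ᵥ c))) τ := by
  open scoped Norms.Operator in
  have hexp := hasDerivAt_exp_smul_const (-A) τ
  let L : Matrix ι ι ℝ →L[ℝ] ι → ℝ :=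
    LinearMap.toContinuousLinearMap ((LinearMap.applyₗ c).comp toLin'.toLinearMap)
  simp only [neg_smul, ← smul_neg]
  exact (L.hasFDerivAt.comp_hasDerivAt τ hexp).congr_deriv
    (by rw [mulVec_mulVec, ← neg_mulVec, ← mul_neg]; rfl)

section Decay

variable {A : Matrix ι ι ℝ} {ε : ℝ} (hε : 0 < ε)
  (hdecay : ∀ x, (fun τ : ℝ => exp ((-τ) • A) *ᵥ x) =O[atTop] fun τ => Real.exp (-ε * τ))
include hε hdecay

theorem integrableOn_exp_neg_smul_mulVec (x : ι → ℝ) :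
    IntegrableOn (fun τ : ℝ => exp ((-τ) • A) *ᵥ x) (Set.Ioi 0) := by
  have hcont : Continuous fun τ : ℝ => exp ((-τ) • A) *ᵥ x :=
    continuous_iff_continuousAt.2 fun τ => (hasDerivAt_exp_neg_smul_mulVec A x τ).continuousAt
  exact ((hcont.locallyIntegrable.locallyIntegrableOn _).integrableOn_of_isBigO_atTop (hdecay x)
    ⟨Set.Ioi 0, Ioi_mem_atTop 0, exp_neg_integrableOn_Ioi 0 hε⟩).mono_set Set.Ioi_subset_Ici_self

theorem integral_exp_neg_smul_mulVec (hA : IsUnit A) (x : ι → ℝ) :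
    ∫ τ in Set.Ioi (0 : ℝ), exp ((-τ) • A) *ᵥ x = A⁻¹ *ᵥ x := by
  have hderiv : ∀ τ, HasDerivAt (fun t : ℝ => -(exp ((-t) • A) *ᵥ (A⁻¹ *ᵥ x)))
      (exp ((-τ) • A) *ᵥ x) τ := fun τ =>
    (hasDerivAt_exp_neg_smul_mulVec A (A⁻¹ *ᵥ x) τ).neg.congr_deriv <| by
      rw [neg_neg, mulVec_mulVec _ A, mul_nonsing_inv A ((isUnit_iff_isUnit_det A).1 hA), one_mulVec]
  have hlim : Tendsto (fun t : ℝ => -(exp ((-t) • A) *ᵥ (A⁻¹ *ᵥ x))) atTop (𝓝 0) := by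
    have hexp : Tendsto (fun τ : ℝ => Real.exp (-ε * τ)) atTop (𝓝 0) :=
      Real.tendsto_exp_atBot.comp (tendsto_id.const_mul_atTop_of_neg (neg_neg_of_pos hε))
    simpa using ((hdecay (A⁻¹ *ᵥ x)).trans_tendsto hexp).neg
  rw [integral_Ioi_of_hasDerivAt_of_tendsto' (fun τ _ => hderiv τ)
    (integrableOn_exp_neg_smul_mulVec hε hdecay x) hlim]
  simp

end Decay

end Matrix

/-- Laplace transform of the age-of-infection kernel `a(τ) = α·exp(−τV)·b`:
if every complex eigenvalue of `z·I + V` has strictly positive real part, then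
`z·I + V` is invertible and `∫_0^∞ e^{−zτ} a(τ) dτ = α·(zI+V)⁻¹·b`. -/
theorem stmt4 (n : ℕ) (V : Matrix (Fin n) (Fin n) ℝ)
    (α b : Fin n → ℝ) (z : ℝ)
    (hV : ∀ w : ℂ, (((z • (1 : Matrix (Fin n) (Fin n) ℝ) + V).map
        (algebraMap ℝ ℂ)).charpoly).IsRoot w → 0 < w.re) :
    IsUnit (z • (1 : Matrix (Fin n) (Fin n) ℝ) + V) ∧
    ∫ τ in Set.Ioi (0:ℝ),
        Real.exp (-(z * τ)) * (α ⬝ᵥ (NormedSpace.exp ((-τ) • V) *ᵥ b)) =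
      α ⬝ᵥ ((z • (1 : Matrix (Fin n) (Fin n) ℝ) + V)⁻¹ *ᵥ b) := by
  set A := z • (1 : Matrix (Fin n) (Fin n) ℝ) + V
  have hA : IsUnit A := isUnit_of_not_isRoot_charpoly_map_zero _ fun h => (hV 0 h).false
  refine ⟨hA, ?_⟩
  obtain ⟨ε, hε, hdecay⟩ := exists_pos_isBigO_exp_neg_smul_mulVec A hV
  have hintegrand : ∀ τ : ℝ, Real.exp (-(z * τ)) * (α ⬝ᵥ (exp ((-τ) • V) *ᵥ b)) =
      α ⬝ᵥ (exp ((-τ) • A) *ᵥ b) := fun τ => by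
    rw [smul_add, smul_smul, exp_smul_one_add, ← Real.exp_eq_exp_ℝ, smul_mulVec, dotProduct_smul,
      smul_eq_mul, neg_mul, mul_comm τ z, mul_comm]
  let L := LinearMap.toContinuousLinearMap (dotProductEquiv ℝ (Fin n) α)
  simp_rw [hintegrand]
  exact (L.integral_comp_comm (integrableOn_exp_neg_smul_mulVec hε hdecay b)).trans
    (congrArg L (integral_exp_neg_smul_mulVec hε hdecay hA b))
end

section
/- Let Λ₁, Λ₂, γ_{r,1}, γ_{r,2}, γ_s be nonnegative reals with Λ := Λ₁ + Λ₂ > 0 and set γ_r := γ_{r,1} + γ_{r,2}. Consider the disease-free equilibrium equations for the two-susceptible-class SIR-PH-FA model with the infectious compartments set to zero: Λ_i + γ_{r,i}·r − s_i·(Λ + γ_s) = 0 for i = 1,2, and (s₁ + s₂)·γ_s − (γ_r + Λ)·r = 0. Then this system has a unique solution (s₁, s₂, r), given by r = γ_s/(Λ + γ_r + γ_s) and s_i = (Λ_i + γ_{r,i}·r)/(Λ + γ_s) for i = 1,2. -/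
/-!
Each susceptible equation is linear in its own `sᵢ`, so it just says
`sᵢ = (Λᵢ + γ_{r,i} r)/(Λ + γ_s)`. Substituting the total susceptible mass `s₁ + s₂ = (Λ + γ_r r)/(Λ + γ_s)` into the recovered
equation turns it into `Λ (γ_s − (Λ + γ_r + γ_s) r) = 0`, which determines `r` since `Λ ≠ 0`.
-/

section DiseaseFreeEquilibrium

variable {K : Type*} [Field K]

theorem sub_mul_eq_zero_iff_eq_div {a s c : K} (hc : c ≠ 0) : a - s * c = 0 ↔ s = a / c := by
  rw [sub_eq_zero, eq_div_iff hc, eq_comm]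

theorem recovered_balance_iff {Λ γr γs r : K} (hΛ : Λ ≠ 0) (hΛs : Λ + γs ≠ 0)
    (hΛrs : Λ + γr + γs ≠ 0) :
    (Λ + γr * r) / (Λ + γs) * γs - (γr + Λ) * r = 0 ↔ r = γs / (Λ + γr + γs) := by
  have key : (Λ + γr * r) / (Λ + γs) * γs - (γr + Λ) * r
      = Λ * (γs - r * (Λ + γr + γs)) / (Λ + γs) := by
    field_simp
    ring
  rw [key, div_eq_zero_iff, mul_eq_zero, sub_eq_zero, eq_div_iff hΛrs]
  simp only [hΛ, hΛs, false_or, or_false]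
  exact eq_comm

theorem disease_free_equilibrium_iff {Λ₁ Λ₂ γr₁ γr₂ γs : K} (hΛ : Λ₁ + Λ₂ ≠ 0)
    (hΛs : Λ₁ + Λ₂ + γs ≠ 0) (hΛrs : Λ₁ + Λ₂ + (γr₁ + γr₂) + γs ≠ 0) (s₁ s₂ r : K) :
    (Λ₁ + γr₁ * r - s₁ * ((Λ₁ + Λ₂) + γs) = 0 ∧
       Λ₂ + γr₂ * r - s₂ * ((Λ₁ + Λ₂) + γs) = 0 ∧
       (s₁ + s₂) * γs - ((γr₁ + γr₂) + (Λ₁ + Λ₂)) * r = 0) ↔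
      (r = γs / ((Λ₁ + Λ₂) + (γr₁ + γr₂) + γs) ∧
       s₁ = (Λ₁ + γr₁ * r) / ((Λ₁ + Λ₂) + γs) ∧
       s₂ = (Λ₂ + γr₂ * r) / ((Λ₁ + Λ₂) + γs)) := by
  rw [sub_mul_eq_zero_iff_eq_div hΛs, sub_mul_eq_zero_iff_eq_div hΛs, ← and_assoc,
    and_comm (a := r = _)]
  refine and_congr_right fun ⟨hs₁, hs₂⟩ => ?_
  have total : s₁ + s₂ = (Λ₁ + Λ₂ + (γr₁ + γr₂) * r) / (Λ₁ + Λ₂ + γs) := by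
    rw [hs₁, hs₂, ← add_div]
    congr 1
    ring
  rw [total, recovered_balance_iff hΛ hΛs hΛrs]

end DiseaseFreeEquilibrium

theorem stmt9_general (Λ₁ Λ₂ γr₁ γr₂ γs : ℝ)
    (hγr₁ : 0 ≤ γr₁) (hγr₂ : 0 ≤ γr₂)
    (hγs : 0 ≤ γs) (hΛ : 0 < Λ₁ + Λ₂) :
    ∀ s₁ s₂ r : ℝ,
      (Λ₁ + γr₁ * r - s₁ * ((Λ₁ + Λ₂) + γs) = 0 ∧
       Λ₂ + γr₂ * r - s₂ * ((Λ₁ + Λ₂) + γs) = 0 ∧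
       (s₁ + s₂) * γs - ((γr₁ + γr₂) + (Λ₁ + Λ₂)) * r = 0) ↔
      (r = γs / ((Λ₁ + Λ₂) + (γr₁ + γr₂) + γs) ∧
       s₁ = (Λ₁ + γr₁ * r) / ((Λ₁ + Λ₂) + γs) ∧
       s₂ = (Λ₂ + γr₂ * r) / ((Λ₁ + Λ₂) + γs)) :=
  disease_free_equilibrium_iff hΛ.ne' (by linarith) (by linarith)

/-- Unique disease-free equilibrium of the two-susceptible-class SIR-PH-FA model:
with `Λ = Λ₁ + Λ₂ > 0` and `γ_r = γ_{r,1} + γ_{r,2}`, the system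
`Λ_i + γ_{r,i}·r − s_i·(Λ + γ_s) = 0` (i = 1,2) and
`(s₁ + s₂)·γ_s − (γ_r + Λ)·r = 0` has the unique solution
`r = γ_s/(Λ + γ_r + γ_s)`, `s_i = (Λ_i + γ_{r,i}·r)/(Λ + γ_s)`. -/
theorem stmt9 (Λ₁ Λ₂ γr₁ γr₂ γs : ℝ)
    (hΛ₁ : 0 ≤ Λ₁) (hΛ₂ : 0 ≤ Λ₂) (hγr₁ : 0 ≤ γr₁) (hγr₂ : 0 ≤ γr₂)
    (hγs : 0 ≤ γs) (hΛ : 0 < Λ₁ + Λ₂) :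
    ∀ s₁ s₂ r : ℝ,
      (Λ₁ + γr₁ * r - s₁ * ((Λ₁ + Λ₂) + γs) = 0 ∧
       Λ₂ + γr₂ * r - s₂ * ((Λ₁ + Λ₂) + γs) = 0 ∧
       (s₁ + s₂) * γs - ((γr₁ + γr₂) + (Λ₁ + Λ₂)) * r = 0) ↔
      (r = γs / ((Λ₁ + Λ₂) + (γr₁ + γr₂) + γs) ∧
       s₁ = (Λ₁ + γr₁ * r) / ((Λ₁ + Λ₂) + γs) ∧
       s₂ = (Λ₂ + γr₂ * r) / ((Λ₁ + Λ₂) + γs)) :=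
  stmt9_general Λ₁ Λ₂ γr₁ γr₂ γs hγr₁ hγr₂ hγs hΛ
end

section
/- Let γ_e, e_i, e_p, i_h, i_r, δ_i, p_h, p_r, δ_p, γ_h, δ_h, β_i, β_p, β_h be reals with γ_e ≠ 0, i_h + i_r + δ_i ≠ 0, p_h + p_r + δ_p ≠ 0, and γ_h + δ_h ≠ 0. Let V be the 4×4 matrix [[γ_e, −e_i, −e_p, 0], [0, i_h + i_r + δ_i, 0, −i_h], [0, 0, p_h + p_r + δ_p, −p_h], [0, 0, 0, γ_h + δ_h]], let α = (1, 0, 0, 0) and b = (0, β_i, β_p, β_h). Then V is invertible and α·V⁻¹·b = e_p·( β_h·p_h + β_p·(δ_h + γ_h) )/( γ_e·(p_h + δ_p + p_r)·(δ_h + γ_h) ) + e_i·( β_h·i_h + β_i·(δ_h + γ_h) )/( γ_e·(i_h + δ_i + i_r)·(δ_h + γ_h) ). -/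
open Matrix

/-- Basic replacement number of the seven-compartment Covid-19 model with
infectious classes e, i, p, h, by the Arino et al. formula `R = α·V⁻¹·b`. -/
theorem stmt13 (γe ei ep ih ir δi ph pr δp γh δh βi βp βh : ℝ)
    (h₁ : γe ≠ 0) (h₂ : ih + ir + δi ≠ 0) (h₃ : ph + pr + δp ≠ 0)
    (h₄ : γh + δh ≠ 0) :
    IsUnit (!![γe, -ei, -ep, 0;
               0, ih + ir + δi, 0, -ih;
               0, 0, ph + pr + δp, -ph;
               0, 0, 0, γh + δh]) ∧
    ![(1:ℝ), 0, 0, 0] ⬝ᵥ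
        ((!![γe, -ei, -ep, 0;
             0, ih + ir + δi, 0, -ih;
             0, 0, ph + pr + δp, -ph;
             0, 0, 0, γh + δh])⁻¹ *ᵥ ![0, βi, βp, βh]) =
      ep * (βh * ph + βp * (δh + γh)) / (γe * (ph + δp + pr) * (δh + γh)) +
      ei * (βh * ih + βi * (δh + γh)) / (γe * (ih + δi + ir) * (δh + γh)) := by
  set A : Matrix (Fin 4) (Fin 4) ℝ :=
    !![γe, -ei, -ep, 0;
       0, ih + ir + δi, 0, -ih;
       0, 0, ph + pr + δp, -ph;
       0, 0, 0, γh + δh] with hA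
  have hdet : A.det = γe * ((ih + ir + δi) * ((ph + pr + δp) * (γh + δh))) := by
    simp [hA, Matrix.det_succ_row_zero, Fin.sum_univ_succ]
  have hdet0 : A.det ≠ 0 := by
    rw [hdet]
    exact mul_ne_zero h₁ (mul_ne_zero h₂ (mul_ne_zero h₃ h₄))
  have hU : IsUnit A := (Matrix.isUnit_iff_isUnit_det A).2 (isUnit_iff_ne_zero.2 hdet0)
  refine ⟨hU, ?_⟩
  set x4 : ℝ := βh / (γh + δh)
  set x3 : ℝ := (βp + ph * x4) / (ph + pr + δp)
  set x2 : ℝ := (βi + ih * x4) / (ih + ir + δi)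
  set x1 : ℝ := (ei * x2 + ep * x3) / γe
  have hx : A *ᵥ ![x1, x2, x3, x4] = ![0, βi, βp, βh] := by
    funext i
    fin_cases i <;>
      simp [hA, Matrix.mulVec, dotProduct, Fin.sum_univ_four, x1, x2, x3, x4] <;>
      field_simp <;> ring
  have hinv : A⁻¹ *ᵥ ![0, βi, βp, βh] = ![x1, x2, x3, x4] := by
    rw [← hx, Matrix.mulVec_mulVec, Matrix.nonsing_inv_mul A (isUnit_iff_ne_zero.2 hdet0), Matrix.one_mulVec]
  have h₂' : ih + δi + ir ≠ 0 := by intro h; apply h₂; linarith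
  have h₃' : ph + δp + pr ≠ 0 := by intro h; apply h₃; linarith
  have h₄' : δh + γh ≠ 0 := by intro h; apply h₄; linarith
  rw [hinv]
  have hdot : ![(1:ℝ), 0, 0, 0] ⬝ᵥ ![x1, x2, x3, x4] = x1 := by
    simp [dotProduct, Fin.sum_univ_four]
  rw [hdot]
  simp only [x1, x2, x3, x4]
  field_simp
  ring
end

section
/- Let m, k be positive natural numbers, let A_E be an invertible real m×m matrix, A_I an invertible real k×k matrix, α_E ∈ ℝ^m with Σ_j (α_E)_j = 1, α_I ∈ ℝ^k, and β ∈ ℝ. Set a_E = −A_E·𝟏_m (where 𝟏_m is the all-ones vector), and let V be the (m+k)×(m+k) block matrix with blocks: top-left −A_E, top-right −a_E α_Iᵀ (the rank-one outer product), bottom-left 0, bottom-right −A_I. Let α = (α_E, 0) ∈ ℝ^{m+k} and b = (0, β·𝟏_k) ∈ ℝ^{m+k}. Then V is invertible and α·V⁻¹·b = −β·( α_I·A_I⁻¹·𝟏_k ). -/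
open Matrix

/-!
`V` is block upper triangular, so `V⁻¹ = [[-A_E⁻¹, A_E⁻¹ a_E α_Iᵀ A_I⁻¹], [0, -A_I⁻¹]]`, and
`α V⁻¹ b` only sees the off-diagonal block. That block has rank one, so the scalar factors as
`(α_E A_E⁻¹ a_E) · (α_I A_I⁻¹ β𝟏)`, and the first factor is `-α_E 𝟏 = -1`.
-/

namespace Matrix

variable {l m n o R : Type*} [Fintype m] [Fintype n] [CommRing R]

theorem dotProduct_mul_vecMulVec_mul_mulVec [Fintype l] [Fintype o] (M : Matrix l m R)
    (N : Matrix n o R) (u : m → R) (v : n → R) (x : l → R) (y : o → R) :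
    x ⬝ᵥ (M * vecMulVec u v * N) *ᵥ y = (x ⬝ᵥ M *ᵥ u) * (v ⬝ᵥ N *ᵥ y) := by
  rw [mul_vecMulVec, vecMulVec_mul, vecMulVec_mulVec, dotProduct_smul, dotProduct_mulVec v]
  rfl

variable [DecidableEq m] [DecidableEq n]

theorem inv_neg (A : Matrix n n R) : (-A)⁻¹ = -A⁻¹ := by
  by_cases hA : IsUnit A
  · exact inv_eq_left_inv <| by
      rw [neg_mul_neg, nonsing_inv_mul _ ((isUnit_iff_isUnit_det A).mp hA)]
  · rw [nonsing_inv_eq_ringInverse, nonsing_inv_eq_ringInverse, Ring.inverse_non_unit _ hA,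
      Ring.inverse_non_unit _ ((IsUnit.neg_iff A).not.mpr hA), neg_zero]

theorem sumElim_dotProduct_inv_fromBlocks_zero₂₁_mulVec (A : Matrix m m R) (B : Matrix m n R)
    (D : Matrix n n R) (hAD : IsUnit A ↔ IsUnit D) (x : m → R) (y : n → R) :
    Sum.elim x 0 ⬝ᵥ ((fromBlocks A B 0 D)⁻¹ *ᵥ Sum.elim 0 y) = -(x ⬝ᵥ (A⁻¹ * B * D⁻¹) *ᵥ y) := by
  rw [inv_fromBlocks_zero₂₁_of_isUnit_iff A B D hAD, fromBlocks_mulVec,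
    sumElim_dotProduct_sumElim]
  simp [neg_mulVec]

theorem dotProduct_inv_mulVec_mulVec {A : Matrix n n R} (hA : IsUnit A) (x v : n → R) :
    x ⬝ᵥ A⁻¹ *ᵥ (A *ᵥ v) = x ⬝ᵥ v := by
  rw [mulVec_mulVec, nonsing_inv_mul _ ((isUnit_iff_isUnit_det A).mp hA), one_mulVec]

end Matrix

theorem stmt15_general (m k : ℕ)
    (AE : Matrix (Fin m) (Fin m) ℝ) (hAE : IsUnit AE)
    (AI : Matrix (Fin k) (Fin k) ℝ) (hAI : IsUnit AI)
    (αE : Fin m → ℝ) (hαE : ∑ j, αE j = 1)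
    (αI : Fin k → ℝ) (β : ℝ)
    (aE : Fin m → ℝ) (haE : aE = -(AE *ᵥ fun _ => (1:ℝ)))
    (V : Matrix (Fin m ⊕ Fin k) (Fin m ⊕ Fin k) ℝ)
    (hV : V = Matrix.fromBlocks (-AE) (-(Matrix.vecMulVec aE αI)) 0 (-AI))
    (α b : Fin m ⊕ Fin k → ℝ)
    (hα : α = Sum.elim αE (fun _ => (0:ℝ)))
    (hb : b = Sum.elim (fun _ => (0:ℝ)) (fun _ => β)) :
    IsUnit V ∧
    α ⬝ᵥ (V⁻¹ *ᵥ b) = -(β * (αI ⬝ᵥ (AI⁻¹ *ᵥ fun _ => (1:ℝ)))) := by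
  refine ⟨hV ▸ isUnit_fromBlocks_zero₂₁.mpr ⟨hAE.neg, hAI.neg⟩, ?_⟩
  have hexit : αE ⬝ᵥ AE⁻¹ *ᵥ aE = -1 := by
    rw [haE, mulVec_neg, dotProduct_neg, dotProduct_inv_mulVec_mulVec hAE, ← Pi.one_def,
      dotProduct_one, hαE]
  have hconst : (fun _ => β : Fin k → ℝ) = β • 1 := by ext; simp
  subst hα hb hV
  simp only [← Pi.zero_def]
  rw [sumElim_dotProduct_inv_fromBlocks_zero₂₁_mulVec _ _ _ (iff_of_true hAE.neg hAI.neg),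
    Matrix.inv_neg, Matrix.inv_neg]
  simp only [Matrix.neg_mul, Matrix.mul_neg, neg_neg, neg_mulVec, dotProduct_neg]
  rw [dotProduct_mul_vecMulVec_mul_mulVec, hexit, hconst, mulVec_smul, dotProduct_smul,
    ← Pi.one_def, smul_eq_mul, neg_one_mul]

/-- Basic reproduction number formula (RSE) for the SEIR-PH model obtained via
the generalized linear chain trick: with latent period of phase type `(α_E, A_E)`
and infectious period of phase type `(α_I, A_I)`, the block matrix
`V = [[−A_E, −a_E α_Iᵀ], [0, −A_I]]` (where `a_E = −A_E·𝟏`) is invertible and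
`α·V⁻¹·b = −β·(α_I·A_I⁻¹·𝟏)` for `α = (α_E, 0)`, `b = (0, β·𝟏)`. -/
theorem stmt15 (m k : ℕ) (hm : 0 < m) (hk : 0 < k)
    (AE : Matrix (Fin m) (Fin m) ℝ) (hAE : IsUnit AE)
    (AI : Matrix (Fin k) (Fin k) ℝ) (hAI : IsUnit AI)
    (αE : Fin m → ℝ) (hαE : ∑ j, αE j = 1)
    (αI : Fin k → ℝ) (β : ℝ)
    (aE : Fin m → ℝ) (haE : aE = -(AE *ᵥ fun _ => (1:ℝ)))
    (V : Matrix (Fin m ⊕ Fin k) (Fin m ⊕ Fin k) ℝ)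
    (hV : V = Matrix.fromBlocks (-AE) (-(Matrix.vecMulVec aE αI)) 0 (-AI))
    (α b : Fin m ⊕ Fin k → ℝ)
    (hα : α = Sum.elim αE (fun _ => (0:ℝ)))
    (hb : b = Sum.elim (fun _ => (0:ℝ)) (fun _ => β)) :
    IsUnit V ∧
    α ⬝ᵥ (V⁻¹ *ᵥ b) = -(β * (αI ⬝ᵥ (AI⁻¹ *ᵥ fun _ => (1:ℝ)))) :=
  stmt15_general m k AE hAE AI hAI αE hαE αI β aE haE V hV α b hα hb
end
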